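/- arXiv:1305.4759 — 7 statements merged into one kernel-verified Lean document; each statement's English description precedes it below -/
import Mathlib

section
/- For M ≥ 1 nonzero complex numbers a_1,…,a_M and any k with 1 ≤ k ≤ M, the elementary symmetric functions satisfy the recurrence ∑_{l=0}^{k} a_M^l · C(M-k+l, l) · S_{k-l}^{(M-1)}(a_1-a_M, …, a_{M-1}-a_M) = S_k^{(M)}(a_1,…,a_M), where S_0^{(M-1)} = 1 and S_M^{(M-1)} = 0. -/
open Finset Polynomial

/-- Recurrence for elementary symmetric functions:
`∑_{l=0}^k a_M^l C(M-k+l,l) S_{k-l}^{(M-1)}(a_1-a_M,…,a_{M-1}-a_M) = S_k^{(M)}(a)`. -/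
theorem esymm_recurrence (m : ℕ) (a : Fin (m + 1) → ℂ) (ha : ∀ i, a i ≠ 0)
    (k : ℕ) (hk1 : 1 ≤ k) (hk2 : k ≤ m + 1) :
    ∑ l ∈ Finset.range (k + 1),
      (a (Fin.last m)) ^ l * ((m + 1 - k + l).choose l : ℂ) *
        ∑ A ∈ Finset.powersetCard (k - l) (Finset.univ : Finset (Fin m)),
          ∏ i ∈ A, (a i.castSucc - a (Fin.last m))
    = ∑ A ∈ Finset.powersetCard k (Finset.univ : Finset (Fin (m + 1))),
        ∏ i ∈ A, a i := by
  set c := a (Fin.last m) with hc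
  set Q : ℂ[X] := ∏ i : Fin m, (X + C (a i.castSucc - c)) with hQ
  have hQdeg : Q.natDegree ≤ m := by
    refine le_trans (Polynomial.natDegree_prod_le _ _) ?_
    simp only [Polynomial.natDegree_X_add_C, Finset.sum_const, Finset.card_univ,
      Fintype.card_fin, smul_eq_mul, mul_one, le_refl]
  -- key polynomial identity : `∏ (X + aᵢ) = Q(X + c) * (X + c)`
  have hP : ∏ i : Fin (m+1), (X + C (a i)) = Q.comp (X + C c) * (X + C c) := by
    rw [hQ, Polynomial.prod_comp, Fin.prod_univ_castSucc, hc]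
    congr 1
    refine Finset.prod_congr rfl fun i _ => ?_
    rw [Polynomial.add_comp, Polynomial.X_comp, Polynomial.C_comp, map_sub]
    ring
  -- the right-hand side as a coefficient
  have hRHS : (∏ i : Fin (m+1), (X + C (a i))).coeff (m + 1 - k)
      = ∑ A ∈ Finset.powersetCard k (Finset.univ : Finset (Fin (m + 1))), ∏ i ∈ A, a i := by
    rw [Finset.prod_X_add_C_coeff _ _
        (by simp : m + 1 - k ≤ #(univ : Finset (Fin (m+1)))),
      show #(univ : Finset (Fin (m+1))) - (m + 1 - k) = k by simp; omega]
  -- expand the composition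
  have hcomp : Q.comp (X + C c) * (X + C c)
      = ∑ n ∈ range (m+1), C (Q.coeff n) * (X + C c) ^ (n+1) := by
    conv_lhs => rw [Q.as_sum_range' (m+1) (by omega)]
    simp only [← Polynomial.C_mul_X_pow_eq_monomial]
    rw [Polynomial.sum_comp, Finset.sum_mul]
    refine Finset.sum_congr rfl fun n _ => ?_
    simp only [Polynomial.mul_comp, Polynomial.C_comp, Polynomial.pow_comp, Polynomial.X_comp]
    ring
  -- the left-hand side as a coefficient
  have hLcoeff : (Q.comp (X + C c) * (X + C c)).coeff (m + 1 - k)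
      = ∑ n ∈ range (m+1),
          Q.coeff n * (c ^ (n + 1 - (m + 1 - k)) * (((n+1).choose (m+1-k) : ℂ))) := by
    rw [hcomp, Polynomial.finset_sum_coeff]
    refine Finset.sum_congr rfl fun n _ => ?_
    rw [Polynomial.coeff_C_mul, Polynomial.coeff_X_add_C_pow]
  rw [← hRHS, hP, hLcoeff]
  -- reindex: `n = m + l - k`
  set F : ℕ → ℂ := fun l => c ^ l * ((m + 1 - k + l).choose l : ℂ) *
      ∑ A ∈ Finset.powersetCard (k - l) (Finset.univ : Finset (Fin m)),
        ∏ i ∈ A, (a i.castSucc - c) with hF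
  set T : ℕ → ℂ := fun n =>
      Q.coeff n * (c ^ (n + 1 - (m + 1 - k)) * (((n+1).choose (m+1-k) : ℂ))) with hT
  show ∑ l ∈ range (k+1), F l = ∑ n ∈ range (m+1), T n
  have hF0 : ∀ l < k - m, F l = 0 := fun l hl => by
    rw [hF]
    dsimp only
    rw [Finset.powersetCard_eq_empty.mpr (by simp; omega)]
    simp
  have hT0 : ∀ n < m - k, T n = 0 := fun n hn => by
    rw [hT]
    dsimp only
    simp only [Nat.choose_eq_zero_of_lt (show n + 1 < m + 1 - k by omega)]
    simp
  have hFT : ∀ l, k - m ≤ l → l ≤ k → F l = T (m + l - k) := by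
    intro l hl1 hl2
    have e1 : m + l - k + 1 - (m + 1 - k) = l := by omega
    have e2 : m + l - k + 1 = m + 1 - k + l := by omega
    have e3 : (m + 1 - k + l).choose (m + 1 - k) = (m + 1 - k + l).choose l := by
      have h := Nat.choose_symm (n := m + 1 - k + l) (k := m + 1 - k) (by omega)
      rw [show m + 1 - k + l - (m + 1 - k) = l by omega] at h
      exact h.symm
    have hcoeffQ : Q.coeff (m + l - k)
        = ∑ A ∈ Finset.powersetCard (k - l) (Finset.univ : Finset (Fin m)),
            ∏ i ∈ A, (a i.castSucc - c) := by
      rw [hQ, Finset.prod_X_add_C_coeff _ _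
          (by simp; omega : m + l - k ≤ #(univ : Finset (Fin m))),
        show #(univ : Finset (Fin m)) - (m + l - k) = k - l by simp; omega]
    rw [hF, hT]
    dsimp only
    rw [hcoeffQ, e1, e2, e3]
    ring
  have e1 : ∑ l ∈ (range (k+1)).filter (fun l => k - m ≤ l), F l
      = ∑ l ∈ range (k+1), F l :=
    Finset.sum_filter_of_ne (fun l hl hne => by by_contra h; exact hne (hF0 l (by omega)))
  have e2 : ∑ n ∈ (range (m+1)).filter (fun n => m - k ≤ n), T n
      = ∑ n ∈ range (m+1), T n :=
    Finset.sum_filter_of_ne (fun n hn hne => by by_contra h; exact hne (hT0 n (by omega)))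
  rw [← e1, ← e2]
  refine Finset.sum_nbij' (fun l => m + l - k) (fun n => n + k - m) ?_ ?_ ?_ ?_ ?_ <;>
    intro x hx <;> simp only [Finset.mem_filter, Finset.mem_range] at hx ⊢
  · omega
  · omega
  · omega
  · omega
  · exact hFT x hx.2 (by omega)
end

section
/- For every a > 0 and every δ ∈ [0, π/2), there exists a constant C > 0 such that for all complex v with |Im v| ≤ δ, one has 2·cosh(a·Re v) ≤ C·|2 cosh v|^a. Equivalently, the ratio 2cosh(a Re v)/|2cosh v|^a is bounded on the strip |Im v| ≤ δ. -/
/-!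
On the strip, `Re (cosh v) = cosh (Re v) * cos (Im v) ≥ cosh (Re v) * cos δ`, hence
`exp |Re v| ≤ 2 cosh (Re v) ≤ ‖2 cosh v‖ / cos δ`. Raising this to the power `a` and using
`cosh (a x) ≤ exp (a |x|)` gives the bound with `C = 2 / (cos δ) ^ a`.
-/

open Real

theorem Complex.cosh_re (z : ℂ) : (cosh z).re = Real.cosh z.re * Real.cos z.im := by
  conv_lhs => rw [← z.re_add_im, cosh_add, cosh_mul_I, sinh_mul_I]
  simp [← ofReal_cosh, ← ofReal_sinh, ← ofReal_cos, ← ofReal_sin]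

theorem Complex.cosh_re_mul_cos_le_norm_cosh {z : ℂ} {δ : ℝ} (hδ : δ ≤ π) (hz : |z.im| ≤ δ) :
    Real.cosh z.re * Real.cos δ ≤ ‖cosh z‖ :=
  calc Real.cosh z.re * Real.cos δ ≤ Real.cosh z.re * Real.cos z.im := by
        gcongr
        rw [← Real.cos_abs z.im]
        exact cos_le_cos_of_nonneg_of_le_pi (abs_nonneg _) hδ hz
    _ = (cosh z).re := (cosh_re z).symm
    _ ≤ ‖cosh z‖ := re_le_norm _

theorem Real.cosh_le_exp_abs (x : ℝ) : cosh x ≤ exp |x| := by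
  rw [← cosh_abs, cosh_eq]
  have : exp (-|x|) ≤ exp |x| := exp_le_exp.2 (by linarith [abs_nonneg x])
  linarith

theorem Real.exp_abs_le_two_mul_cosh (x : ℝ) : exp |x| ≤ 2 * cosh x := by
  rw [cosh_eq]
  linarith [exp_abs_le x]

/-- For every `a > 0` and `δ ∈ [0, π/2)`, the ratio `2cosh(a Re v)/|2cosh v|^a`
is bounded on the strip `|Im v| ≤ δ`. -/
theorem cosh_ratio_bounded (a : ℝ) (ha : 0 < a) (δ : ℝ) (hδ0 : 0 ≤ δ)
    (hδ : δ < Real.pi / 2) :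
    ∃ C : ℝ, 0 < C ∧ ∀ v : ℂ, |v.im| ≤ δ →
      2 * Real.cosh (a * v.re) ≤ C * ‖2 * Complex.cosh v‖ ^ a := by
  have hcos : 0 < cos δ := cos_pos_of_mem_Ioo ⟨by linarith [pi_pos], hδ⟩
  refine ⟨2 / cos δ ^ a, by positivity, fun v hv => ?_⟩
  have hexp : exp |v.re| ≤ ‖2 * Complex.cosh v‖ / cos δ := by
    rw [le_div_iff₀ hcos, norm_mul, Complex.norm_two]
    calc exp |v.re| * cos δ ≤ 2 * (cosh v.re * cos δ) := by
          rw [← mul_assoc]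
          gcongr
          exact exp_abs_le_two_mul_cosh _
      _ ≤ 2 * ‖Complex.cosh v‖ := by
          gcongr
          exact Complex.cosh_re_mul_cos_le_norm_cosh (by linarith [pi_pos]) hv
  have hcosh : cosh (a * v.re) ≤ exp |v.re| ^ a := by
    simpa [← exp_mul, abs_mul, abs_of_pos ha, mul_comm] using cosh_le_exp_abs (a * v.re)
  calc 2 * cosh (a * v.re) ≤ 2 * exp |v.re| ^ a := by gcongr
    _ ≤ 2 * (‖2 * Complex.cosh v‖ / cos δ) ^ a := by gcongr
    _ = 2 / cos δ ^ a * ‖2 * Complex.cosh v‖ ^ a := by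
        rw [div_rpow (norm_nonneg _) hcos.le]
        ring
end

section
/- For every complex λ with Re λ > 0 and every δ ∈ [0, π/2), there exists a constant C > 0 such that for all complex z with |Im z| ≤ δ one has |cosh(z)^{−λ}| ≤ C·exp(−(Re λ)·|Re z|), where cosh(z)^{−λ} = exp(−λ·Log(cosh z)) with the principal logarithm. -/
/-!
Since `Re (cosh z) = cosh (Re z) · cos (Im z)`, on the strip `|Im z| ≤ δ < π/2` we get
`‖cosh z‖ ≥ (cos δ / 2) · exp |Re z|`. For `w ≠ 0` the principal power satisfies
`‖w ^ s‖ = ‖w‖ ^ Re s · exp (-arg w · Im s) ≤ ‖w‖ ^ Re s · exp (π |Im s|)`, and with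
`Re s = -Re λ ≤ 0` the lower bound on `‖cosh z‖` turns into the claimed upper bound.
-/

open Real

namespace Complex

lemma cosh_re_s5 (z : ℂ) : (cosh z).re = Real.cosh z.re * Real.cos z.im := by
  rw [cosh, Real.cosh_eq]
  simp only [div_ofNat_re, add_re, exp_re, neg_re, neg_im, Real.cos_neg]
  ring

lemma cosh_re_mul_abs_cos_im_le_norm_cosh (z : ℂ) :
    Real.cosh z.re * |Real.cos z.im| ≤ ‖cosh z‖ := by
  simpa [cosh_re_s5, abs_mul, abs_of_pos (Real.cosh_pos _)] using abs_re_le_norm (cosh z)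

lemma norm_cpow_le_rpow_mul_exp (w s : ℂ) : ‖w ^ s‖ ≤ ‖w‖ ^ s.re * Real.exp (π * |s.im|) := by
  refine (norm_cpow_le w s).trans ?_
  rw [div_eq_mul_inv, ← Real.exp_neg]
  gcongr
  calc -(arg w * s.im) ≤ |arg w * s.im| := neg_le_abs _
    _ = |arg w| * |s.im| := abs_mul _ _
    _ ≤ π * |s.im| := by gcongr; exact abs_arg_le_pi w

end Complex

lemma Real.exp_abs_le_two_mul_cosh_s5 (x : ℝ) : Real.exp |x| ≤ 2 * Real.cosh x := by
  rw [Real.cosh_eq]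
  linarith [Real.exp_abs_le x]

lemma cos_div_two_mul_exp_abs_re_le_norm_cosh {δ : ℝ} (hδ : δ < π / 2) {z : ℂ}
    (hz : |z.im| ≤ δ) : Real.cos δ / 2 * Real.exp |z.re| ≤ ‖Complex.cosh z‖ := by
  have hcos : Real.cos δ ≤ |Real.cos z.im| := by
    rw [← Real.cos_abs z.im]
    calc Real.cos δ ≤ Real.cos |z.im| :=
          Real.cos_le_cos_of_nonneg_of_le_pi (abs_nonneg _) (by linarith [Real.pi_pos]) hz
      _ ≤ _ := le_abs_self _
  calc Real.cos δ / 2 * Real.exp |z.re| ≤ |Real.cos z.im| / 2 * (2 * Real.cosh z.re) := by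
        gcongr
        exact Real.exp_abs_le_two_mul_cosh_s5 _
    _ = Real.cosh z.re * |Real.cos z.im| := by ring
    _ ≤ ‖Complex.cosh z‖ := Complex.cosh_re_mul_abs_cos_im_le_norm_cosh z

/-- For `Re λ > 0` and `δ ∈ [0, π/2)`, there is `C > 0` with
`|cosh(z)^{-λ}| ≤ C exp(-(Re λ)|Re z|)` on the strip `|Im z| ≤ δ`. -/
theorem cosh_cpow_neg_bound (lam : ℂ) (hlam : 0 < lam.re) (δ : ℝ) (hδ0 : 0 ≤ δ)
    (hδ : δ < Real.pi / 2) :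
    ∃ C : ℝ, 0 < C ∧ ∀ z : ℂ, |z.im| ≤ δ →
      ‖(Complex.cosh z) ^ (-lam)‖ ≤ C * Real.exp (-lam.re * |z.re|) := by
  have hcos : 0 < Real.cos δ := Real.cos_pos_of_mem_Ioo ⟨by linarith [Real.pi_pos], hδ⟩
  refine ⟨Real.exp (π * |lam.im|) * (Real.cos δ / 2) ^ (-lam.re), by positivity, fun z hz => ?_⟩
  have hlow := cos_div_two_mul_exp_abs_re_le_norm_cosh hδ hz
  calc ‖(Complex.cosh z) ^ (-lam)‖
      ≤ ‖Complex.cosh z‖ ^ (-lam.re) * Real.exp (π * |lam.im|) := by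
        simpa only [Complex.neg_re, Complex.neg_im, abs_neg] using
          Complex.norm_cpow_le_rpow_mul_exp (Complex.cosh z) (-lam)
    _ ≤ (Real.cos δ / 2 * Real.exp |z.re|) ^ (-lam.re) * Real.exp (π * |lam.im|) := by
        have hmono := Real.rpow_le_rpow_of_nonpos (by positivity) hlow (neg_nonpos.2 hlam.le)
        gcongr
    _ = Real.exp (π * |lam.im|) * (Real.cos δ / 2) ^ (-lam.re) * Real.exp (-lam.re * |z.re|) := by
        rw [Real.mul_rpow (by positivity) (Real.exp_pos _).le, ← Real.exp_mul]
        ring_nf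
end

section
/- For a > 0 and real numbers x (= Re z) with x ≠ 0, the integral ∫_{ℝ} ds / (4·cosh(a(s + x/2))·cosh(a(s − x/2))) equals x/(2·sinh(a·x)). -/
/-!
Since `tanh u - tanh v = sinh (u - v) / (cosh u * cosh v)`, the function
`t ↦ (log (cosh (t + x / 2)) - log (cosh (t - x / 2))) / sinh x` is an antiderivative of
`1 / (cosh (t + x / 2) * cosh (t - x / 2))`. It is odd, and `log (cosh t) = t - log 2 + o(1)`
at `+∞` makes it tend to `x / sinh x` there, so the integral over `ℝ` is `2 * x / sinh x`;
the integrand being positive, its integrability follows from the existence of these limits.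
The substitution `s ↦ a * s` reduces the general case to `a = 1`.
-/

open MeasureTheory Filter Real Topology

theorem MeasureTheory.integrable_deriv_of_nonneg {F f : ℝ → ℝ} {m n : ℝ}
    (hderiv : ∀ x, HasDerivAt F (f x) x) (hf : ∀ x, 0 ≤ f x)
    (hbot : Tendsto F atBot (𝓝 m)) (htop : Tendsto F atTop (𝓝 n)) : Integrable f := by
  have hint (a b : ℝ) : IntervalIntegrable f volume a b :=
    intervalIntegral.intervalIntegrable_deriv_of_nonneg
      (fun x _ => (hderiv x).continuousAt.continuousWithinAt) (fun x _ => hderiv x)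
      (fun x _ => hf x)
  refine integrable_of_intervalIntegral_norm_tendsto (n - m) (fun i => (hint (-i) i).1)
    tendsto_neg_atTop_atBot tendsto_id ?_
  have heq (i : ℝ) : ∫ x in -i..i, ‖f x‖ = F i - F (-i) := by
    simp_rw [Real.norm_of_nonneg (hf _)]
    exact intervalIntegral.integral_eq_sub_of_hasDerivAt (fun x _ => hderiv x) (hint _ _)
  simp_rw [heq]
  exact htop.sub (hbot.comp tendsto_neg_atTop_atBot)

namespace Real

theorem hasDerivAt_log_cosh (t : ℝ) : HasDerivAt (fun t => log (cosh t)) (tanh t) t := by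
  simpa [tanh_eq_sinh_div_cosh] using (hasDerivAt_cosh t).log (cosh_pos t).ne'

theorem tanh_sub_tanh (u v : ℝ) : tanh u - tanh v = sinh (u - v) / (cosh u * cosh v) := by
  rw [tanh_eq_sinh_div_cosh, tanh_eq_sinh_div_cosh, sinh_sub,
    div_sub_div _ _ (cosh_pos u).ne' (cosh_pos v).ne']

theorem tendsto_log_cosh_sub_atTop : Tendsto (fun t => log (cosh t) - t) atTop (𝓝 (-log 2)) := by
  have heq (t : ℝ) : log (cosh t) - t = log ((1 + exp (-(2 * t))) / 2) := by
    rw [show log (cosh t) - t = log (cosh t / exp t) by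
      rw [log_div (cosh_pos t).ne' (exp_pos t).ne', log_exp], cosh_eq]
    congr 1
    rw [show -(2 * t) = -t + -t by ring, exp_add]
    have hinv : exp t * exp (-t) = 1 := by rw [← exp_add, add_neg_cancel, exp_zero]
    field_simp
    linear_combination (-exp (-t)) * hinv
  have hlim : Tendsto (fun t => (1 + exp (-(2 * t))) / 2) atTop (𝓝 ((1 + 0) / 2)) :=
    ((tendsto_exp_neg_atTop_nhds_zero.comp
      (tendsto_id.const_mul_atTop two_pos)).const_add 1).div_const 2
  simp_rw [heq]
  simpa [Function.comp_def, log_inv] using (continuousAt_log (by norm_num)).tendsto.comp hlim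

theorem hasDerivAt_log_cosh_add_sub_log_cosh_sub (x t : ℝ) :
    HasDerivAt (fun t => log (cosh (t + x / 2)) - log (cosh (t - x / 2)))
      (sinh x / (cosh (t + x / 2) * cosh (t - x / 2))) t := by
  refine (((hasDerivAt_log_cosh _).comp t ((hasDerivAt_id t).add_const (x / 2))).sub
    ((hasDerivAt_log_cosh _).comp t ((hasDerivAt_id t).sub_const (x / 2)))).congr_deriv ?_
  rw [id, mul_one, mul_one, tanh_sub_tanh, add_sub_sub_cancel, add_halves]

theorem tendsto_log_cosh_add_sub_log_cosh_sub_atTop (x : ℝ) :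
    Tendsto (fun t => log (cosh (t + x / 2)) - log (cosh (t - x / 2))) atTop (𝓝 x) := by
  have h := ((tendsto_log_cosh_sub_atTop.comp
      (tendsto_atTop_add_const_right _ (x / 2) tendsto_id)).sub
    (tendsto_log_cosh_sub_atTop.comp
      (tendsto_atTop_add_const_right _ (-(x / 2)) tendsto_id))).add_const x
  convert h using 2 with t
  · simp only [Function.comp_apply, id]; ring_nf
  · ring

theorem tendsto_log_cosh_add_sub_log_cosh_sub_atBot (x : ℝ) :
    Tendsto (fun t => log (cosh (t + x / 2)) - log (cosh (t - x / 2))) atBot (𝓝 (-x)) := by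
  have h := (tendsto_log_cosh_add_sub_log_cosh_sub_atTop x).neg.comp tendsto_neg_atBot_atTop
  convert h using 2 with t
  rw [Function.comp_apply, ← cosh_neg (-t + x / 2), ← cosh_neg (-t - x / 2)]
  ring_nf

theorem integral_one_div_cosh_add_mul_cosh_sub {x : ℝ} (hx : x ≠ 0) :
    ∫ t, 1 / (cosh (t + x / 2) * cosh (t - x / 2)) = 2 * x / sinh x := by
  have hsinh : sinh x ≠ 0 := sinh_ne_zero.2 hx
  have hderiv (t : ℝ) :
      HasDerivAt (fun t => (log (cosh (t + x / 2)) - log (cosh (t - x / 2))) / sinh x)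
        (1 / (cosh (t + x / 2) * cosh (t - x / 2))) t := by
    refine ((hasDerivAt_log_cosh_add_sub_log_cosh_sub x t).div_const (sinh x)).congr_deriv ?_
    field_simp
  have hpos (t : ℝ) : 0 ≤ 1 / (cosh (t + x / 2) * cosh (t - x / 2)) := by positivity
  have hbot := (tendsto_log_cosh_add_sub_log_cosh_sub_atBot x).div_const (sinh x)
  have htop := (tendsto_log_cosh_add_sub_log_cosh_sub_atTop x).div_const (sinh x)
  rw [integral_of_hasDerivAt_of_tendsto hderiv (integrable_deriv_of_nonneg hderiv hpos hbot htop)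
    hbot htop]
  ring

end Real

/-- `∫ ds / (4 cosh(a(s+x/2)) cosh(a(s−x/2))) = x/(2 sinh(a x))` for `a > 0`, `x ≠ 0`. -/
theorem integral_inv_cosh_cosh (a x : ℝ) (ha : 0 < a) (hx : x ≠ 0) :
    ∫ s : ℝ, 1 / (4 * Real.cosh (a * (s + x / 2)) * Real.cosh (a * (s - x / 2)))
      = x / (2 * Real.sinh (a * x)) := by
  have hscale (s : ℝ) : 1 / (4 * cosh (a * (s + x / 2)) * cosh (a * (s - x / 2)))
      = 4⁻¹ * (1 / (cosh (a * s + a * x / 2) * cosh (a * s - a * x / 2))) := by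
    rw [mul_add, mul_sub, mul_div_assoc]
    field_simp
  simp_rw [hscale]
  rw [integral_const_mul,
    Measure.integral_comp_mul_left (fun t => 1 / (cosh (t + a * x / 2) * cosh (t - a * x / 2))),
    integral_one_div_cosh_add_mul_cosh_sub (mul_ne_zero ha.ne' hx), abs_of_pos (inv_pos.2 ha),
    smul_eq_mul]
  field_simp
  ring
end

section
/- Let a > 0, let x be real, and let w be real with 0 < |w| < 2a. Then ∫_{ℝ} exp(−s·w) / (cosh(a(s + x/2))·cosh(a(s − x/2))) ds = 2π·sinh(w·x/2) / (a·sin(π·w/(2a))·sinh(a·x)), provided x ≠ 0 (extended by continuity at x = 0). -/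
/-!
Substituting `u = exp (2 a s)` turns the integral into
`(2 / a) ∫₀^∞ u ^ (-β) / ((u + p) (u + q)) du` with `β = w / (2 a)`, `p = exp (a x)`,
`q = exp (-a x)`, since `p q = 1`. Partial fractions reduce this to the Mellin transform
`∫₀^∞ u ^ (-β) / (u + c) du = π c ^ (-β) / sin (π β)`, obtained by writing
`1 / (u + c) = ∫₀^∞ exp (-(u + c) t) dt`, exchanging the integrals (Tonelli), evaluating two
Gamma integrals and applying the reflection formula `Γ(β) Γ(1 - β) = π / sin (π β)`.
Negative `w` reduces to positive `w` by `s ↦ -s`.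
-/

open MeasureTheory Real Set

theorem lintegral_rpow_sub_one_mul_exp_neg_mul {a r : ℝ} (ha : 0 < a) (hr : 0 < r) :
    ∫⁻ u in Ioi 0, ENNReal.ofReal (u ^ (a - 1) * exp (-(r * u)))
      = ENNReal.ofReal ((1 / r) ^ a * Gamma a) := by
  rw [← integral_rpow_mul_exp_neg_mul_Ioi ha hr, ofReal_integral_eq_lintegral_ofReal]
  · have h := integrableOn_rpow_mul_exp_neg_mul_rpow (by linarith : -1 < a - 1) one_pos hr
    simp only [rpow_one, neg_mul] at h
    exact h
  · filter_upwards [ae_restrict_mem measurableSet_Ioi] with u (hu : 0 < u)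
    positivity

theorem lintegral_exp_neg_mul {r : ℝ} (hr : 0 < r) :
    ∫⁻ t in Ioi 0, ENNReal.ofReal (exp (-(r * t))) = ENNReal.ofReal (1 / r) := by
  simpa using lintegral_rpow_sub_one_mul_exp_neg_mul one_pos hr

section MellinInvAdd

variable {β c : ℝ}

theorem sin_pi_mul_pos (hβ₀ : 0 < β) (hβ₁ : β < 1) : 0 < sin (π * β) :=
  sin_pos_of_pos_of_lt_pi (by positivity) (by nlinarith [pi_pos])

theorem lintegral_rpow_neg_div_add (hβ₀ : 0 < β) (hβ₁ : β < 1) (hc : 0 < c) :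
    ∫⁻ u in Ioi 0, ENNReal.ofReal (u ^ (-β) / (u + c))
      = ENNReal.ofReal (π * c ^ (-β) / sin (π * β)) := by
  have h_inv (u : ℝ) (hu : u ∈ Ioi 0) : ENNReal.ofReal (u ^ (-β) / (u + c))
      = ∫⁻ t in Ioi 0, ENNReal.ofReal (u ^ (-β) * exp (-((u + c) * t))) := by
    have hu : 0 < u := hu
    simp_rw [ENNReal.ofReal_mul (rpow_nonneg hu.le _),
      lintegral_const_mul' _ _ ENNReal.ofReal_ne_top,
      lintegral_exp_neg_mul (by positivity : 0 < u + c),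
      ← ENNReal.ofReal_mul (rpow_nonneg hu.le _), mul_one_div]
  have h_inner (t : ℝ) (ht : t ∈ Ioi 0) :
      ∫⁻ u in Ioi 0, ENNReal.ofReal (u ^ (-β) * exp (-((u + c) * t)))
        = ENNReal.ofReal (Gamma (1 - β)) * ENNReal.ofReal (t ^ (β - 1) * exp (-(c * t))) := by
    have ht : 0 < t := ht
    have h_split (u : ℝ) : u ^ (-β) * exp (-((u + c) * t))
        = exp (-(c * t)) * (u ^ ((1 - β) - 1) * exp (-(t * u))) := by
      rw [show 1 - β - 1 = -β by ring, mul_left_comm, ← exp_add]; ring_nf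
    have h_pow : (1 / t) ^ (1 - β) = t ^ (β - 1) := by
      rw [one_div, inv_rpow ht.le, ← rpow_neg ht.le, neg_sub]
    simp_rw [h_split, ENNReal.ofReal_mul (exp_pos _).le,
      lintegral_const_mul' _ _ ENNReal.ofReal_ne_top,
      lintegral_rpow_sub_one_mul_exp_neg_mul (by linarith : 0 < 1 - β) ht, h_pow,
      ← ENNReal.ofReal_mul (Gamma_nonneg_of_nonneg (by linarith : 0 ≤ 1 - β)),
      ← ENNReal.ofReal_mul (exp_pos _).le]
    ring_nf
  have h_measurable : Measurable fun p : ℝ × ℝ ↦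
      ENNReal.ofReal (p.1 ^ (-β) * exp (-((p.1 + c) * p.2))) := by
    fun_prop
  have h_sin := sin_pi_mul_pos hβ₀ hβ₁
  have h_reflection :
      Gamma (1 - β) * ((1 / c) ^ β * Gamma β) = π * c ^ (-β) / sin (π * β) := by
    rw [one_div, inv_rpow hc.le, ← rpow_neg hc.le, eq_div_iff h_sin.ne',
      show Gamma (1 - β) * (c ^ (-β) * Gamma β) * sin (π * β)
        = c ^ (-β) * (Gamma β * Gamma (1 - β) * sin (π * β)) by ring,
      Gamma_mul_Gamma_one_sub, div_mul_cancel₀ _ h_sin.ne', mul_comm]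
  rw [setLIntegral_congr_fun measurableSet_Ioi h_inv,
    lintegral_lintegral_swap h_measurable.aemeasurable,
    setLIntegral_congr_fun measurableSet_Ioi h_inner,
    lintegral_const_mul' _ _ ENNReal.ofReal_ne_top,
    lintegral_rpow_sub_one_mul_exp_neg_mul hβ₀ hc,
    ← ENNReal.ofReal_mul (Gamma_nonneg_of_nonneg (by linarith)), h_reflection]

theorem integrableOn_rpow_neg_div_add (hβ₀ : 0 < β) (hβ₁ : β < 1) (hc : 0 < c) :
    IntegrableOn (fun u : ℝ ↦ u ^ (-β) / (u + c)) (Ioi 0) := by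
  have h_nonneg : 0 ≤ᵐ[volume.restrict (Ioi 0)] fun u : ℝ ↦ u ^ (-β) / (u + c) := by
    filter_upwards [ae_restrict_mem measurableSet_Ioi] with u (hu : 0 < u)
    positivity
  refine ⟨?_, ?_⟩
  · refine ContinuousOn.aestronglyMeasurable (fun u (hu : 0 < u) ↦ ?_) measurableSet_Ioi
    exact ((continuousAt_rpow_const u _ (.inl hu.ne')).div (by fun_prop)
      (by positivity)).continuousWithinAt
  · rw [hasFiniteIntegral_iff_ofReal h_nonneg, lintegral_rpow_neg_div_add hβ₀ hβ₁ hc]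
    exact ENNReal.ofReal_lt_top

theorem integral_rpow_neg_div_add (hβ₀ : 0 < β) (hβ₁ : β < 1) (hc : 0 < c) :
    ∫ u in Ioi 0, u ^ (-β) / (u + c) = π * c ^ (-β) / sin (π * β) := by
  have h_sin := sin_pi_mul_pos hβ₀ hβ₁
  rw [← ENNReal.ofReal_eq_ofReal_iff (setIntegral_nonneg measurableSet_Ioi
      fun u (hu : 0 < u) ↦ by positivity) (by positivity),
    ofReal_integral_eq_lintegral_ofReal (integrableOn_rpow_neg_div_add hβ₀ hβ₁ hc),
    lintegral_rpow_neg_div_add hβ₀ hβ₁ hc]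
  filter_upwards [ae_restrict_mem measurableSet_Ioi] with u (hu : 0 < u)
  positivity

end MellinInvAdd

theorem integral_rpow_neg_div_add_mul_add {β p q : ℝ} (hβ₀ : 0 < β) (hβ₁ : β < 1)
    (hp : 0 < p) (hq : 0 < q) (hpq : p ≠ q) :
    ∫ u in Ioi 0, u ^ (-β) / ((u + p) * (u + q))
      = π / sin (π * β) * ((q ^ (-β) - p ^ (-β)) / (p - q)) := by
  have h_partial (u : ℝ) (hu : u ∈ Ioi 0) : u ^ (-β) / ((u + p) * (u + q))
      = (p - q)⁻¹ * (u ^ (-β) / (u + q) - u ^ (-β) / (u + p)) := by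
    have hu : 0 < u := hu
    have : p - q ≠ 0 := sub_ne_zero.mpr hpq
    field_simp
    ring
  rw [setIntegral_congr_fun measurableSet_Ioi h_partial, integral_const_mul,
    integral_sub (integrableOn_rpow_neg_div_add hβ₀ hβ₁ hq)
      (integrableOn_rpow_neg_div_add hβ₀ hβ₁ hp),
    integral_rpow_neg_div_add hβ₀ hβ₁ hq, integral_rpow_neg_div_add hβ₀ hβ₁ hp]
  ring

theorem integral_exp_mul_smul_comp_exp_mul {E : Type*} [NormedAddCommGroup E] [NormedSpace ℝ E]
    (f : ℝ → E) {k : ℝ} (hk : 0 < k) :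
    ∫ s, exp (k * s) • f (exp (k * s)) = k⁻¹ • ∫ u in Ioi 0, f u := by
  have h_exp : ∫ t, exp t • f (exp t) = ∫ u in Ioi 0, f u := by
    rw [← range_exp, ← image_univ, integral_image_eq_integral_abs_deriv_smul MeasurableSet.univ
      (fun t _ ↦ (hasDerivAt_exp t).hasDerivWithinAt) exp_injective.injOn, Measure.restrict_univ]
    simp_rw [abs_of_pos (exp_pos _)]
  rw [Measure.integral_comp_mul_left (fun t ↦ exp t • f (exp t)) k, h_exp,
    abs_of_pos (inv_pos.mpr hk)]

theorem cosh_mul_cosh_eq (A B : ℝ) :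
    cosh A * cosh B
      = (exp (A + B) + exp (A - B)) * (exp (A + B) + exp (-(A - B))) / (4 * exp (A + B)) := by
  simp only [cosh_eq, sub_eq_add_neg, neg_add, neg_neg, exp_add, exp_neg]
  field_simp
  ring

theorem integral_exp_div_cosh_mul_cosh_neg (a x w : ℝ) :
    ∫ s, exp (-s * -w) / (cosh (a * (s + x / 2)) * cosh (a * (s - x / 2)))
      = ∫ s, exp (-s * w) / (cosh (a * (s + x / 2)) * cosh (a * (s - x / 2))) := by
  rw [← integral_neg_eq_self]
  congr 1 with s
  rw [show a * (-s + x / 2) = -(a * (s - x / 2)) by ring,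
    show a * (-s - x / 2) = -(a * (s + x / 2)) by ring, cosh_neg, cosh_neg, mul_comm (cosh _),
    neg_neg, mul_neg, neg_mul, mul_comm s]

theorem integral_exp_div_cosh_mul_cosh_of_pos {a x w : ℝ} (ha : 0 < a) (hx : x ≠ 0)
    (hw₀ : 0 < w) (hw : w < 2 * a) :
    ∫ s, exp (-s * w) / (cosh (a * (s + x / 2)) * cosh (a * (s - x / 2)))
      = 2 * π * sinh (w * x / 2) / (a * sin (π * w / (2 * a)) * sinh (a * x)) := by
  set β := w / (2 * a) with hβ
  set p := exp (a * x)
  set q := exp (-(a * x))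
  set g : ℝ → ℝ := fun u ↦ u ^ (-β) / ((u + p) * (u + q))
  have h_rpow (y : ℝ) : exp y ^ (-β) = exp (-(β * y)) := by rw [← exp_mul]; ring_nf
  -- `cosh_mul_cosh_eq` makes the integrand rational in `u = exp (2 a s)`
  have h_integrand (s : ℝ) :
      exp (-s * w) / (cosh (a * (s + x / 2)) * cosh (a * (s - x / 2)))
        = 4 * (exp (2 * a * s) • g (exp (2 * a * s))) := by
    rw [cosh_mul_cosh_eq, show a * (s + x / 2) + a * (s - x / 2) = 2 * a * s by ring,
      show a * (s + x / 2) - a * (s - x / 2) = a * x by ring, smul_eq_mul]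
    simp only [g, p, q, h_rpow]
    rw [show β * (2 * a * s) = s * w by rw [hβ]; field_simp]
    field_simp
  have hβ₀ : 0 < β := by positivity
  have hβ₁ : β < 1 := (div_lt_one (by positivity)).mpr hw
  have hpq : p ≠ q := fun h ↦
    hx ((mul_eq_zero.mp (by linarith [exp_injective h] : a * x = 0)).resolve_left ha.ne')
  have h_sinh (y : ℝ) : exp y - exp (-y) = 2 * sinh y := by rw [sinh_eq]; ring
  calc _ = 4 * ((2 * a)⁻¹ * ∫ u in Ioi 0, g u) := by
        simp_rw [h_integrand, integral_const_mul,
          integral_exp_mul_smul_comp_exp_mul g (by positivity : 0 < 2 * a), smul_eq_mul]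
    _ = 4 * ((2 * a)⁻¹ * (π / sin (π * β) * ((q ^ (-β) - p ^ (-β)) / (p - q)))) := by
        rw [integral_rpow_neg_div_add_mul_add hβ₀ hβ₁ (exp_pos _) (exp_pos _) hpq]
    _ = _ := by
        rw [h_rpow, h_rpow, show -(β * -(a * x)) = w * x / 2 by rw [hβ]; field_simp,
          show -(β * (a * x)) = -(w * x / 2) by rw [hβ]; field_simp, h_sinh, h_sinh,
          show π * β = π * w / (2 * a) by rw [hβ]; ring]
        field_simp
        ring

/-- `∫ e^{-sw} ds / (cosh(a(s+x/2)) cosh(a(s−x/2))) = 2π sinh(wx/2)/(a sin(πw/2a) sinh(ax))`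
for `a > 0`, `x ≠ 0`, `0 < |w| < 2a`. -/
theorem integral_exp_inv_cosh_cosh (a x w : ℝ) (ha : 0 < a) (hx : x ≠ 0)
    (hw0 : 0 < |w|) (hw : |w| < 2 * a) :
    ∫ s : ℝ, Real.exp (-s * w) / (Real.cosh (a * (s + x / 2)) * Real.cosh (a * (s - x / 2)))
      = 2 * Real.pi * Real.sinh (w * x / 2) /
          (a * Real.sin (Real.pi * w / (2 * a)) * Real.sinh (a * x)) := by
  wlog hw_pos : 0 < w generalizing w
  · have h_neg := this (-w) (by rwa [abs_neg]) (by rwa [abs_neg])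
      (neg_pos.mpr ((not_lt.mp hw_pos).lt_of_ne (abs_pos.mp hw0)))
    rw [← integral_exp_div_cosh_mul_cosh_neg, h_neg]
    simp only [neg_mul, mul_neg, neg_div, div_neg, neg_neg, sinh_neg, sin_neg]
  rw [abs_of_pos hw_pos] at hw
  exact integral_exp_div_cosh_mul_cosh_of_pos ha hx hw_pos hw
end

section
/- For real w_1, w_2, w_3, the two-dimensional integral B_2(w) = ∫_{ℝ²} dv_1 dv_2 · (v_1 − v_2)·sinh(v_1 − v_2) / ∏_{j=1}^{3} ∏_{k=1}^{2} cosh(w_j − v_k) equals 4·∏_{1 ≤ j < k ≤ 3} (w_j − w_k)/sinh(w_j − w_k), with each ratio interpreted as 1 when w_j = w_k. -/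
open MeasureTheory

/-- `x/sinh x`, extended by `1` at `x = 0`. -/
noncomputable def shr (x : ℝ) : ℝ := if x = 0 then 1 else x / Real.sinh x

open Real Filter Topology Set

/-!
Put `P(v) = ∏ⱼ cosh (wⱼ - v)`. Since `(v₁ - v₂) sinh (v₁ - v₂)` equals
`½ (v₁ - v₂) (e^{v₁} e^{-v₂} - e^{-v₁} e^{v₂})`, Fubini turns `B₂` into `D₊ E₋ - D₋ E₊` with
`E_± = ∫ e^{±v} / P(v)` and `D_± = ∫ v e^{±v} / P(v)`. In `X = e^{2v}`, `e^{±v} / P(v)` is a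
constant times `X ^ m / ∏ⱼ (X + aⱼ)` (`m = 2, 1`, `aⱼ = e^{2wⱼ}`), whose partial fraction
coefficients `pⱼ` satisfy `∑ⱼ pⱼ / aⱼ = 0`. At `-∞`, primitives of `1 / (X + a)` and `v / (X + a)`
are `v / a` and `(v² - c) / (2a)`, with `c` independent of `a`, up to explicit constants and
`o(1)`; for the second one this is the inversion formula `L(x) + L(1/x) = ½ log² x + 2 L(1)` of
`L(x) = -Li₂(-x)`. The cancellation `∑ⱼ pⱼ / aⱼ = 0` removes the divergent parts, so `E_±` and
`D_±` are explicit and for pairwise distinct `wⱼ` the formula becomes an algebraic identity.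
Coinciding `wⱼ` follow by continuity, the integral being continuous in `w` by dominated
convergence.
-/

-- `negDilogNeg x = -Li₂ (-x)`
noncomputable def negDilogNeg (x : ℝ) : ℝ := ∫ t in (0 : ℝ)..x, log (1 + t) / t

lemma log_one_add_nonneg {x : ℝ} (hx : 0 ≤ x) : 0 ≤ log (1 + x) := log_nonneg (by linarith)

lemma log_one_add_le_self {x : ℝ} (hx : 0 ≤ x) : log (1 + x) ≤ x := by
  linarith [log_le_sub_one_of_pos (x := 1 + x) (by linarith)]

lemma log_one_add_div_self_nonneg {t : ℝ} (ht : 0 < t) : 0 ≤ log (1 + t) / t :=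
  div_nonneg (log_one_add_nonneg ht.le) ht.le

lemma log_one_add_div_self_le_one {t : ℝ} (ht : 0 < t) : log (1 + t) / t ≤ 1 :=
  (div_le_one ht).2 (log_one_add_le_self ht.le)

lemma measurable_log_one_add_div_self : Measurable fun t : ℝ => log (1 + t) / t :=
  (measurable_log.comp (measurable_const.add measurable_id)).div measurable_id

lemma intervalIntegrable_log_one_add_div_self {x : ℝ} (hx : 0 ≤ x) :
    IntervalIntegrable (fun t => log (1 + t) / t) volume 0 x := by
  rw [intervalIntegrable_iff_integrableOn_Ioc_of_le hx]
  refine (integrable_const (1 : ℝ)).mono'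
    measurable_log_one_add_div_self.aestronglyMeasurable ?_
  refine ae_restrict_of_forall_mem measurableSet_Ioc fun t ht => ?_
  rw [norm_of_nonneg (log_one_add_div_self_nonneg ht.1)]
  exact log_one_add_div_self_le_one ht.1

lemma negDilogNeg_nonneg {x : ℝ} (hx : 0 ≤ x) : 0 ≤ negDilogNeg x :=
  intervalIntegral.integral_nonneg hx fun t ht => by
    rcases ht.1.eq_or_lt with rfl | ht₀
    · simp
    · exact log_one_add_div_self_nonneg ht₀

lemma negDilogNeg_le_self {x : ℝ} (hx : 0 ≤ x) : negDilogNeg x ≤ x := by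
  have := intervalIntegral.integral_mono_on (g := fun _ => 1) hx
    (intervalIntegrable_log_one_add_div_self hx) intervalIntegrable_const fun t ht => by
      rcases ht.1.eq_or_lt with rfl | ht₀
      · simp
      · exact log_one_add_div_self_le_one ht₀
  simpa [negDilogNeg] using this

lemma hasDerivAt_negDilogNeg {x : ℝ} (hx : 0 < x) :
    HasDerivAt negDilogNeg (log (1 + x) / x) x := by
  have hcont : ContinuousAt (fun t => log (1 + t) / t) x :=
    ((continuousAt_log (x := 1 + x) (by linarith)).comp
      (continuousAt_const.add continuousAt_id)).div continuousAt_id hx.ne'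
  exact intervalIntegral.integral_hasDerivAt_right (intervalIntegrable_log_one_add_div_self hx.le)
    ⟨univ, univ_mem, measurable_log_one_add_div_self.aestronglyMeasurable⟩ hcont

lemma negDilogNeg_add_negDilogNeg_inv {x : ℝ} (hx : 0 < x) :
    negDilogNeg x + negDilogNeg x⁻¹ = log x ^ 2 / 2 + 2 * negDilogNeg 1 := by
  set g : ℝ → ℝ := fun y => negDilogNeg y + negDilogNeg y⁻¹ - log y ^ 2 / 2
  have hg : ∀ y ∈ Ioi (0 : ℝ), HasDerivAt g 0 y := by
    intro y (hy : 0 < y)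
    have hinv := (hasDerivAt_negDilogNeg (inv_pos.2 hy)).comp y (hasDerivAt_inv hy.ne')
    have hlog := ((hasDerivAt_log hy.ne').pow 2).div_const 2
    have hlog_inv : log (1 + y⁻¹) = log (1 + y) - log y := by
      rw [← log_div (by positivity) hy.ne']
      congr 1
      field_simp
      ring
    refine (((hasDerivAt_negDilogNeg hy).add hinv).sub hlog).congr_deriv ?_
    rw [hlog_inv]
    field_simp
    ring
  have hconst := isOpen_Ioi.is_const_of_deriv_eq_zero isPreconnected_Ioi
    (fun y hy => (hg y hy).differentiableAt.differentiableWithinAt)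
    (fun y hy => (hg y hy).deriv) (mem_Ioi.2 hx) (mem_Ioi.2 one_pos)
  simp only [g, inv_one, log_one] at hconst
  linarith

lemma tendsto_comp_of_nonneg_of_le_self {α : Type*} {l : Filter α} {f : ℝ → ℝ} {u : α → ℝ}
    (hf₀ : ∀ x, 0 ≤ x → 0 ≤ f x) (hf : ∀ x, 0 ≤ x → f x ≤ x) (hu₀ : ∀ v, 0 ≤ u v)
    (hu : Tendsto u l (𝓝 0)) : Tendsto (fun v => f (u v)) l (𝓝 0) :=
  squeeze_zero (fun v => hf₀ _ (hu₀ v)) (fun v => hf _ (hu₀ v)) hu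

lemma tendsto_mul_comp_of_nonneg_of_le_self {l : Filter ℝ} {f u : ℝ → ℝ}
    (hf₀ : ∀ x, 0 ≤ x → 0 ≤ f x) (hf : ∀ x, 0 ≤ x → f x ≤ x) (hu₀ : ∀ v, 0 ≤ u v)
    (hu : Tendsto (fun v => v * u v) l (𝓝 0)) : Tendsto (fun v => v * f (u v)) l (𝓝 0) := by
  refine squeeze_zero_norm (fun v => ?_) (a := fun v => ‖v * u v‖) (by simpa using hu.norm)
  rw [norm_mul, norm_mul, norm_of_nonneg (hf₀ _ (hu₀ v)), norm_of_nonneg (hu₀ v)]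
  exact mul_le_mul_of_nonneg_left (hf _ (hu₀ v)) (norm_nonneg v)

section ExpDecay

variable (b : ℝ)

lemma tendsto_mul_exp_neg_two_mul_atTop : Tendsto (fun v => b * exp (-2 * v)) atTop (𝓝 0) := by
  simpa using (tendsto_exp_atBot.comp (tendsto_id.const_mul_atTop_of_neg
    (by norm_num : (-2 : ℝ) < 0))).const_mul b

lemma tendsto_self_mul_mul_exp_neg_two_mul_atTop :
    Tendsto (fun v => v * (b * exp (-2 * v))) atTop (𝓝 0) := by
  have := ((tendsto_pow_mul_exp_neg_atTop_nhds_zero 1).comp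
    (tendsto_id.const_mul_atTop (by norm_num : (0 : ℝ) < 2))).const_mul (b / 2)
  rw [mul_zero] at this
  refine this.congr fun v => ?_
  simp only [Function.comp, id, pow_one, neg_mul]
  ring

lemma tendsto_mul_exp_two_mul_atBot : Tendsto (fun v => b * exp (2 * v)) atBot (𝓝 0) := by
  rw [← tendsto_comp_neg_atTop_iff]
  simpa using tendsto_mul_exp_neg_two_mul_atTop b

lemma tendsto_self_mul_mul_exp_two_mul_atBot :
    Tendsto (fun v => v * (b * exp (2 * v))) atBot (𝓝 0) := by
  rw [← tendsto_comp_neg_atTop_iff]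
  simpa using (tendsto_self_mul_mul_exp_neg_two_mul_atTop b).neg

end ExpDecay

theorem integral_sum_eq_of_hasDerivAt {ι : Type*} (s : Finset ι) (p a c : ι → ℝ)
    {f F : ι → ℝ → ℝ} (q : ℝ → ℝ) (hp : ∑ i ∈ s, p i / a i = 0)
    (hF : ∀ i ∈ s, ∀ v, HasDerivAt (F i) (f i v) v) (htop : ∀ i ∈ s, Tendsto (F i) atTop (𝓝 0))
    (hbot : ∀ i ∈ s, Tendsto (fun v => F i v - (q v / a i - c i)) atBot (𝓝 0))
    (hint : Integrable fun v => ∑ i ∈ s, p i * f i v) :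
    ∫ v, ∑ i ∈ s, p i * f i v = ∑ i ∈ s, p i * c i := by
  set G : ℝ → ℝ := fun v => ∑ i ∈ s, p i * F i v
  have hG : ∀ v, HasDerivAt G (∑ i ∈ s, p i * f i v) v := fun v =>
    HasDerivAt.fun_sum fun i hi => (hF i hi v).const_mul (p i)
  have hGtop : Tendsto G atTop (𝓝 0) := by
    simpa using tendsto_finsetSum s fun i hi => (htop i hi).const_mul (p i)
  -- the parts of the `F i` growing like `q` cancel in `G` because `∑ p i / a i = 0`
  have hG_eq : ∀ v, G v = ∑ i ∈ s, p i * (F i v - (q v / a i - c i)) - ∑ i ∈ s, p i * c i := by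
    intro v
    have hq : ∑ i ∈ s, p i * (q v / a i) = 0 := by
      simp_rw [mul_div_left_comm _ (q v), ← Finset.mul_sum, hp, mul_zero]
    simp only [G, mul_sub, Finset.sum_sub_distrib, hq]
    ring
  have hGbot : Tendsto G atBot (𝓝 (-∑ i ∈ s, p i * c i)) := by
    refine Tendsto.congr (fun v => (hG_eq v).symm) ?_
    simpa using (tendsto_finsetSum s fun i hi => (hbot i hi).const_mul (p i)).sub_const
      (∑ i ∈ s, p i * c i)
  rw [integral_of_hasDerivAt_of_tendsto hG hint hGbot hGtop]
  ring

noncomputable def expAddPrim₀ (a v : ℝ) : ℝ := -log (1 + a * exp (-2 * v)) / (2 * a)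

noncomputable def expAddPrim₁ (a v : ℝ) : ℝ :=
  -(v * log (1 + a * exp (-2 * v)) + negDilogNeg (a * exp (-2 * v)) / 2) / (2 * a)

section Primitives

variable {a : ℝ} (ha : 0 < a)
include ha

lemma hasDerivAt_log_one_add_mul_exp_neg (v : ℝ) :
    HasDerivAt (fun v => log (1 + a * exp (-2 * v))) (-(2 * a) / (exp (2 * v) + a)) v := by
  have hu := (((hasDerivAt_id v).const_mul (-2)).exp.const_mul a).const_add 1
  refine (hu.log (by positivity)).congr_deriv ?_
  rw [show -2 * id v = -(2 * v) by simp, exp_neg]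
  field_simp

lemma hasDerivAt_expAddPrim₀ (v : ℝ) : HasDerivAt (expAddPrim₀ a) (exp (2 * v) + a)⁻¹ v := by
  refine ((hasDerivAt_log_one_add_mul_exp_neg ha v).neg.div_const (2 * a)).congr_deriv ?_
  field_simp

lemma hasDerivAt_expAddPrim₁ (v : ℝ) :
    HasDerivAt (expAddPrim₁ a) (v * (exp (2 * v) + a)⁻¹) v := by
  have hu := ((hasDerivAt_id v).const_mul (-2)).exp.const_mul a
  have hN := ((hasDerivAt_negDilogNeg (by positivity)).comp v hu).div_const 2
  refine ((((hasDerivAt_id v).mul (hasDerivAt_log_one_add_mul_exp_neg ha v)).add hN).neg.div_const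
    (2 * a)).congr_deriv ?_
  have : (0 : ℝ) < 1 + a * exp (-(2 * v)) := by positivity
  simp only [id, show -2 * v = -(2 * v) by ring]
  rw [exp_neg] at this ⊢
  field_simp
  ring

lemma log_one_add_mul_exp_neg_eq (v : ℝ) :
    log (1 + a * exp (-2 * v)) = log a - 2 * v + log (1 + a⁻¹ * exp (2 * v)) := by
  have h : 1 + a * exp (-2 * v) = a * exp (-2 * v) * (1 + a⁻¹ * exp (2 * v)) := by
    rw [neg_mul, exp_neg]
    field_simp
    ring
  rw [h, log_mul (by positivity) (by positivity), log_mul ha.ne' (exp_pos _).ne', log_exp]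
  ring

lemma negDilogNeg_mul_exp_neg_eq (v : ℝ) :
    negDilogNeg (a * exp (-2 * v))
      = (log a - 2 * v) ^ 2 / 2 + 2 * negDilogNeg 1 - negDilogNeg (a⁻¹ * exp (2 * v)) := by
  have hinv : (a * exp (-2 * v))⁻¹ = a⁻¹ * exp (2 * v) := by
    rw [mul_inv, ← exp_neg]
    ring_nf
  have hlog : log (a * exp (-2 * v)) = log a - 2 * v := by
    rw [log_mul ha.ne' (exp_pos _).ne', log_exp]
    ring
  have hN := negDilogNeg_add_negDilogNeg_inv (x := a * exp (-2 * v)) (by positivity)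
  rw [hinv, hlog] at hN
  linarith

lemma tendsto_expAddPrim₀_atTop : Tendsto (expAddPrim₀ a) atTop (𝓝 0) := by
  have h := (tendsto_comp_of_nonneg_of_le_self (fun _ => log_one_add_nonneg)
    (fun _ => log_one_add_le_self) (fun _ => by positivity)
    (tendsto_mul_exp_neg_two_mul_atTop a)).neg.div_const (2 * a)
  rwa [neg_zero, zero_div] at h

lemma tendsto_expAddPrim₀_atBot :
    Tendsto (fun v => expAddPrim₀ a v - (v / a - log a / (2 * a))) atBot (𝓝 0) := by
  have h := ((tendsto_comp_of_nonneg_of_le_self (fun _ => log_one_add_nonneg)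
    (fun _ => log_one_add_le_self) (fun _ => by positivity)
    (tendsto_mul_exp_two_mul_atBot a⁻¹)).neg.div_const (2 * a))
  rw [neg_zero, zero_div] at h
  refine h.congr fun v => ?_
  rw [expAddPrim₀, log_one_add_mul_exp_neg_eq ha]
  field_simp
  ring

lemma tendsto_expAddPrim₁_atTop : Tendsto (expAddPrim₁ a) atTop (𝓝 0) := by
  have h := ((tendsto_mul_comp_of_nonneg_of_le_self (fun _ => log_one_add_nonneg)
    (fun _ => log_one_add_le_self) (fun _ => by positivity)
    (tendsto_self_mul_mul_exp_neg_two_mul_atTop a)).add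
    ((tendsto_comp_of_nonneg_of_le_self (fun _ => negDilogNeg_nonneg)
      (fun _ => negDilogNeg_le_self) (fun _ => by positivity)
      (tendsto_mul_exp_neg_two_mul_atTop a)).div_const 2)).neg.div_const (2 * a)
  rwa [zero_div, add_zero, neg_zero, zero_div] at h

lemma tendsto_expAddPrim₁_atBot :
    Tendsto (fun v => expAddPrim₁ a v - ((v ^ 2 - negDilogNeg 1) / 2 / a - log a ^ 2 / (8 * a)))
      atBot (𝓝 0) := by
  have h := ((tendsto_mul_comp_of_nonneg_of_le_self (fun _ => log_one_add_nonneg)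
    (fun _ => log_one_add_le_self) (fun _ => by positivity)
    (tendsto_self_mul_mul_exp_two_mul_atBot a⁻¹)).sub
    ((tendsto_comp_of_nonneg_of_le_self (fun _ => negDilogNeg_nonneg)
      (fun _ => negDilogNeg_le_self) (fun _ => by positivity)
      (tendsto_mul_exp_two_mul_atBot a⁻¹)).div_const 2)).neg.div_const (2 * a)
  rw [zero_div, sub_zero, neg_zero, zero_div] at h
  refine h.congr fun v => ?_
  rw [expAddPrim₁, log_one_add_mul_exp_neg_eq ha, negDilogNeg_mul_exp_neg_eq ha]
  field_simp
  ring

end Primitives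

section ExpAddIntegrals

variable {ι : Type*} (s : Finset ι) (p a : ι → ℝ) (ha : ∀ i ∈ s, 0 < a i)
  (hp : ∑ i ∈ s, p i / a i = 0)
include ha hp

theorem integral_sum_div_exp_add (hint : Integrable fun v => ∑ i ∈ s, p i / (exp (2 * v) + a i)) :
    ∫ v, ∑ i ∈ s, p i / (exp (2 * v) + a i) = ∑ i ∈ s, p i * log (a i) / (2 * a i) := by
  have h := integral_sum_eq_of_hasDerivAt s p a _ id hp
    (fun i hi => hasDerivAt_expAddPrim₀ (ha i hi)) (fun i hi => tendsto_expAddPrim₀_atTop (ha i hi))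
    (fun i hi => tendsto_expAddPrim₀_atBot (ha i hi)) (by simpa only [div_eq_mul_inv] using hint)
  simpa only [div_eq_mul_inv, mul_assoc] using h

theorem integral_sum_mul_div_exp_add
    (hint : Integrable fun v => ∑ i ∈ s, p i * v / (exp (2 * v) + a i)) :
    ∫ v, ∑ i ∈ s, p i * v / (exp (2 * v) + a i) = ∑ i ∈ s, p i * log (a i) ^ 2 / (8 * a i) := by
  have h := integral_sum_eq_of_hasDerivAt s p a _ _ hp
    (fun i hi => hasDerivAt_expAddPrim₁ (ha i hi)) (fun i hi => tendsto_expAddPrim₁_atTop (ha i hi))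
    (fun i hi => tendsto_expAddPrim₁_atBot (ha i hi))
    (by simpa only [div_eq_mul_inv, mul_assoc] using hint)
  simpa only [div_eq_mul_inv, mul_assoc] using h

end ExpAddIntegrals

-- `pfCoeffs m a j` is the residue of `X ^ m / ∏ k, (X + a k)` at `X = -a j`.
noncomputable def pfCoeffs (m : ℕ) (a : Fin 3 → ℝ) : Fin 3 → ℝ :=
  ![(-a 0) ^ m / ((a 1 - a 0) * (a 2 - a 0)), (-a 1) ^ m / ((a 0 - a 1) * (a 2 - a 1)),
    (-a 2) ^ m / ((a 0 - a 2) * (a 1 - a 2))]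

section PartialFractions

variable {a : Fin 3 → ℝ} (h₀₁ : a 0 ≠ a 1) (h₀₂ : a 0 ≠ a 2) (h₁₂ : a 1 ≠ a 2) {m : ℕ}
include h₀₁ h₀₂ h₁₂

lemma pow_div_prod_add_eq_sum_pfCoeffs (hm : m ≤ 2) {X : ℝ} (hX : ∀ j, X + a j ≠ 0) :
    X ^ m / ∏ j, (X + a j) = ∑ j, pfCoeffs m a j / (X + a j) := by
  have := hX 0
  have := hX 1
  have := hX 2
  simp only [Fin.prod_univ_three, Fin.sum_univ_three, pfCoeffs, Matrix.cons_val_zero,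
    Matrix.cons_val_one, Matrix.cons_val_two, Matrix.head_cons, Matrix.tail_cons]
  interval_cases m <;> field_simp [sub_ne_zero.2 h₀₁, sub_ne_zero.2 h₀₂, sub_ne_zero.2 h₁₂,
    sub_ne_zero.2 h₀₁.symm, sub_ne_zero.2 h₀₂.symm, sub_ne_zero.2 h₁₂.symm] <;> ring

lemma sum_pfCoeffs_div_eq_zero (hm₁ : 1 ≤ m) (hm₂ : m ≤ 2) (ha : ∀ j, a j ≠ 0) :
    ∑ j, pfCoeffs m a j / a j = 0 := by
  have := ha 0
  have := ha 1
  have := ha 2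
  simp only [Fin.sum_univ_three, pfCoeffs, Matrix.cons_val_zero, Matrix.cons_val_one,
    Matrix.cons_val_two, Matrix.head_cons, Matrix.tail_cons]
  interval_cases m <;> field_simp [sub_ne_zero.2 h₀₁, sub_ne_zero.2 h₀₂, sub_ne_zero.2 h₁₂,
    sub_ne_zero.2 h₀₁.symm, sub_ne_zero.2 h₀₂.symm, sub_ne_zero.2 h₁₂.symm] <;> ring

end PartialFractions

noncomputable def coshProd (w : Fin 3 → ℝ) (v : ℝ) : ℝ := ∏ j, cosh (w j - v)

lemma coshProd_pos (w : Fin 3 → ℝ) (v : ℝ) : 0 < coshProd w v :=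
  Finset.prod_pos fun _ _ => cosh_pos _

lemma continuous_coshProd (w : Fin 3 → ℝ) : Continuous (coshProd w) := by
  unfold coshProd
  fun_prop

lemma inv_cosh_sub_le (w v : ℝ) : (cosh (w - v))⁻¹ ≤ 2 * exp (|w| - |v|) := by
  have h₁ : exp (|v| - |w|) ≤ exp |w - v| :=
    exp_le_exp.2 (by rw [abs_sub_comm]; exact abs_sub_abs_le_abs_sub v w)
  have h₂ : exp |w - v| ≤ 2 * cosh (w - v) := by
    rw [← cosh_abs, cosh_eq]
    linarith [exp_pos (-|w - v|)]
  calc (cosh (w - v))⁻¹ ≤ (exp (|v| - |w|) / 2)⁻¹ := inv_anti₀ (by positivity) (by linarith)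
    _ = 2 * exp (|w| - |v|) := by rw [inv_div, div_eq_mul_inv, ← exp_neg, neg_sub]

lemma inv_coshProd_le (w : Fin 3 → ℝ) (v : ℝ) :
    (coshProd w v)⁻¹ ≤ 8 * exp (3 * ‖w‖ - 3 * |v|) := by
  rw [coshProd, ← Finset.prod_inv_distrib]
  calc ∏ j, (cosh (w j - v))⁻¹ ≤ ∏ _j : Fin 3, 2 * exp (‖w‖ - |v|) := by
        refine Finset.prod_le_prod (fun _ _ => (inv_pos.2 (cosh_pos _)).le) fun j _ => ?_
        refine (inv_cosh_sub_le _ _).trans ?_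
        gcongr
        exact norm_le_pi_norm w j
    _ = 8 * exp (3 * ‖w‖ - 3 * |v|) := by
        rw [Finset.prod_const, Finset.card_univ, Fintype.card_fin, mul_pow, ← exp_nat_mul]
        norm_num
        ring_nf

lemma integrable_exp_neg_abs : Integrable fun x : ℝ => exp (-|x|) := by
  refine (integrable_inv_one_add_sq.const_mul 2).mono' (by fun_prop) (ae_of_all _ fun x => ?_)
  have h : 1 + x ^ 2 ≤ 2 * exp |x| := by
    have := quadratic_le_exp_of_nonneg (abs_nonneg x)
    rw [sq_abs] at this
    linarith [abs_nonneg x]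
  rw [norm_of_nonneg (exp_pos _).le, exp_neg, ← div_eq_mul_inv, le_div_iff₀ (by positivity),
    inv_mul_le_iff₀ (exp_pos _)]
  linarith

lemma integrable_div_coshProd (w : Fin 3 → ℝ) {g : ℝ → ℝ} {C : ℝ} (hg : Continuous g)
    (hbound : ∀ v, |g v| ≤ C * exp (2 * |v|)) :
    Integrable fun v => g v / coshProd w v := by
  refine (integrable_exp_neg_abs.const_mul (8 * C * exp (3 * ‖w‖))).mono'
    (hg.div (continuous_coshProd w) fun v => (coshProd_pos w v).ne').aestronglyMeasurable
    (ae_of_all _ fun v => ?_)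
  have hexp : exp (2 * |v|) * exp (3 * ‖w‖ - 3 * |v|) = exp (3 * ‖w‖) * exp (-|v|) := by
    rw [← exp_add, ← exp_add]
    ring_nf
  rw [norm_div, norm_of_nonneg (coshProd_pos w v).le, div_eq_mul_inv, Real.norm_eq_abs]
  calc |g v| * (coshProd w v)⁻¹ ≤ C * exp (2 * |v|) * (8 * exp (3 * ‖w‖ - 3 * |v|)) :=
        mul_le_mul (hbound v) (inv_coshProd_le w v) (inv_pos.2 (coshProd_pos w v)).le
          ((abs_nonneg _).trans (hbound v))
    _ = 8 * C * exp (3 * ‖w‖) * exp (-|v|) := by linear_combination (8 * C) * hexp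

lemma mul_le_abs_of_abs_le_one {c : ℝ} (hc : |c| ≤ 1) (v : ℝ) : c * v ≤ |v| :=
  (le_abs_self _).trans (by rw [abs_mul]; exact mul_le_of_le_one_left (abs_nonneg v) hc)

lemma integrable_exp_mul_div_coshProd (w : Fin 3 → ℝ) {c : ℝ} (hc : |c| ≤ 1) :
    Integrable fun v => exp (c * v) / coshProd w v := by
  refine integrable_div_coshProd w (C := 1) (by fun_prop) fun v => ?_
  rw [abs_of_pos (exp_pos _), one_mul, exp_le_exp]
  linarith [mul_le_abs_of_abs_le_one hc v, abs_nonneg v]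

lemma integrable_mul_exp_mul_div_coshProd (w : Fin 3 → ℝ) {c : ℝ} (hc : |c| ≤ 1) :
    Integrable fun v => v * exp (c * v) / coshProd w v := by
  refine integrable_div_coshProd w (C := 1) (by fun_prop) fun v => ?_
  rw [abs_mul, abs_of_pos (exp_pos _), one_mul, two_mul, exp_add]
  exact mul_le_mul (by linarith [add_one_le_exp |v|])
    (exp_le_exp.2 (mul_le_abs_of_abs_le_one hc v)) (exp_pos _).le (exp_pos _).le

lemma cosh_sub_eq (w v : ℝ) : cosh (w - v) = (exp (2 * v) + exp (2 * w)) / (2 * exp (w + v)) := by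
  have h₁ : exp (w - v) * exp (w + v) = exp (2 * w) := by rw [← exp_add]; ring_nf
  have h₂ : exp (-(w - v)) * exp (w + v) = exp (2 * v) := by rw [← exp_add]; ring_nf
  rw [cosh_eq, eq_div_iff (by positivity)]
  linear_combination h₁ + h₂

lemma exp_mul_div_coshProd (w : Fin 3 → ℝ) (c v : ℝ) :
    exp (c * v) / coshProd w v
      = 8 * exp (∑ j, w j) * (exp ((c + 3) * v) / ∏ j, (exp (2 * v) + exp (2 * w j))) := by
  have hexp : exp (c * v) * (exp (w 0 + v) * exp (w 1 + v) * exp (w 2 + v))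
      = exp (w 0 + w 1 + w 2) * exp ((c + 3) * v) := by
    simp only [← exp_add]
    ring_nf
  simp only [coshProd, Fin.prod_univ_three, Fin.sum_univ_three, cosh_sub_eq]
  field_simp
  ring_nf at hexp ⊢
  linear_combination 8 * hexp

lemma exp_two_mul_ne_exp_two_mul {x y : ℝ} (h : x ≠ y) : exp (2 * x) ≠ exp (2 * y) := by
  rw [Ne, exp_eq_exp]
  contrapose! h
  linarith

lemma abs_two_mul_sub_three_le_one {m : ℕ} (hm₁ : 1 ≤ m) (hm₂ : m ≤ 2) : |(2 * m - 3 : ℝ)| ≤ 1 := by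
  interval_cases m <;> norm_num

section OneDimensionalIntegrals

variable {w : Fin 3 → ℝ} (h₀₁ : w 0 ≠ w 1) (h₀₂ : w 0 ≠ w 2) (h₁₂ : w 1 ≠ w 2) {m : ℕ}
include h₀₁ h₀₂ h₁₂

lemma exp_mul_div_coshProd_eq_sum (hm : m ≤ 2) (v : ℝ) :
    exp ((2 * m - 3) * v) / coshProd w v
      = ∑ j, 8 * exp (∑ k, w k) * pfCoeffs m (fun k => exp (2 * w k)) j
          / (exp (2 * v) + exp (2 * w j)) := by
  rw [exp_mul_div_coshProd, show (2 * m - 3 + 3) * v = m * (2 * v) by ring, exp_nat_mul,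
    pow_div_prod_add_eq_sum_pfCoeffs (exp_two_mul_ne_exp_two_mul h₀₁)
      (exp_two_mul_ne_exp_two_mul h₀₂) (exp_two_mul_ne_exp_two_mul h₁₂) hm
      fun j => (by positivity), Finset.mul_sum]
  simp only [mul_div_assoc]

variable (hm₁ : 1 ≤ m) (hm₂ : m ≤ 2)
include hm₁ hm₂

lemma sum_coeff_div_exp_two_mul_eq_zero :
    ∑ j, 8 * exp (∑ k, w k) * pfCoeffs m (fun k => exp (2 * w k)) j / exp (2 * w j) = 0 := by
  simp_rw [mul_div_assoc, ← Finset.mul_sum]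
  rw [sum_pfCoeffs_div_eq_zero (exp_two_mul_ne_exp_two_mul h₀₁) (exp_two_mul_ne_exp_two_mul h₀₂)
    (exp_two_mul_ne_exp_two_mul h₁₂) hm₁ hm₂ fun j => (exp_pos _).ne', mul_zero]

theorem integral_exp_mul_div_coshProd :
    ∫ v, exp ((2 * m - 3) * v) / coshProd w v
      = ∑ j, 8 * exp (∑ k, w k) * pfCoeffs m (fun k => exp (2 * w k)) j * w j / exp (2 * w j) := by
  have hpf := exp_mul_div_coshProd_eq_sum h₀₁ h₀₂ h₁₂ hm₂
  rw [integral_congr_ae (ae_of_all _ hpf), integral_sum_div_exp_add _ _ _ (fun j _ => exp_pos _)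
    (sum_coeff_div_exp_two_mul_eq_zero h₀₁ h₀₂ h₁₂ hm₁ hm₂)
    ((integrable_exp_mul_div_coshProd w (abs_two_mul_sub_three_le_one hm₁ hm₂)).congr
      (ae_of_all _ hpf))]
  refine Finset.sum_congr rfl fun j _ => ?_
  rw [log_exp]
  field_simp

theorem integral_mul_exp_mul_div_coshProd :
    ∫ v, v * exp ((2 * m - 3) * v) / coshProd w v
      = ∑ j, 8 * exp (∑ k, w k) * pfCoeffs m (fun k => exp (2 * w k)) j * w j ^ 2
          / (2 * exp (2 * w j)) := by
  have hpf : ∀ v, v * exp ((2 * m - 3) * v) / coshProd w v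
      = ∑ j, 8 * exp (∑ k, w k) * pfCoeffs m (fun k => exp (2 * w k)) j * v
          / (exp (2 * v) + exp (2 * w j)) := fun v => by
    rw [mul_div_assoc, exp_mul_div_coshProd_eq_sum h₀₁ h₀₂ h₁₂ hm₂, Finset.mul_sum]
    exact Finset.sum_congr rfl fun j _ => by ring
  rw [integral_congr_ae (ae_of_all _ hpf), integral_sum_mul_div_exp_add _ _ _
    (fun j _ => exp_pos _) (sum_coeff_div_exp_two_mul_eq_zero h₀₁ h₀₂ h₁₂ hm₁ hm₂)
    ((integrable_mul_exp_mul_div_coshProd w (abs_two_mul_sub_three_le_one hm₁ hm₂)).congr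
      (ae_of_all _ hpf))]
  refine Finset.sum_congr rfl fun j _ => ?_
  rw [log_exp]
  field_simp
  ring

end OneDimensionalIntegrals

noncomputable def B2 (w : Fin 3 → ℝ) : ℝ :=
  ∫ z : ℝ × ℝ, (z.1 - z.2) * sinh (z.1 - z.2) / (coshProd w z.1 * coshProd w z.2)

section ProdMulSubMul

variable {α β : Type*} [MeasurableSpace α] [MeasurableSpace β] {μ : Measure α} {ν : Measure β}
  {f₁ f₂ : α → ℝ} {g₁ g₂ : β → ℝ} (hf₁ : Integrable f₁ μ)
  (hf₂ : Integrable f₂ μ) (hg₁ : Integrable g₁ ν) (hg₂ : Integrable g₂ ν)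
include hf₁ hf₂ hg₁ hg₂

lemma integrable_prod_mul_sub_mul :
    Integrable (fun z : α × β => f₁ z.1 * g₁ z.2 - f₂ z.1 * g₂ z.2) (μ.prod ν) :=
  (hf₁.mul_prod hg₁).sub (hf₂.mul_prod hg₂)

lemma integral_prod_mul_sub_mul [SigmaFinite μ] [SigmaFinite ν] :
    ∫ z, (f₁ z.1 * g₁ z.2 - f₂ z.1 * g₂ z.2) ∂μ.prod ν
      = (∫ x, f₁ x ∂μ) * (∫ y, g₁ y ∂ν) - (∫ x, f₂ x ∂μ) * (∫ y, g₂ y ∂ν) := by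
  rw [integral_sub (hf₁.mul_prod hg₁) (hf₂.mul_prod hg₂), integral_prod_mul, integral_prod_mul]

end ProdMulSubMul

lemma B2_eq_moments (w : Fin 3 → ℝ) :
    B2 w = (∫ v, v * exp v / coshProd w v) * (∫ v, exp (-v) / coshProd w v)
      - (∫ v, v * exp (-v) / coshProd w v) * (∫ v, exp v / coshProd w v) := by
  set e : ℝ → ℝ → ℝ := fun c v => exp (c * v) / coshProd w v
  set d : ℝ → ℝ → ℝ := fun c v => v * exp (c * v) / coshProd w v
  have hpt : ∀ z : ℝ × ℝ, (z.1 - z.2) * sinh (z.1 - z.2) / (coshProd w z.1 * coshProd w z.2)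
      = ((d 1 z.1 * e (-1) z.2 - e 1 z.1 * d (-1) z.2)
        + (e (-1) z.1 * d 1 z.2 - d (-1) z.1 * e 1 z.2)) / 2 := fun z => by
    simp only [d, e, sinh_eq, one_mul, neg_one_mul, exp_sub, exp_neg]
    field_simp
    ring
  have he : ∀ c : ℝ, |c| ≤ 1 → Integrable (e c) := fun c hc => integrable_exp_mul_div_coshProd w hc
  have hd : ∀ c : ℝ, |c| ≤ 1 → Integrable (d c) := fun c hc =>
    integrable_mul_exp_mul_div_coshProd w hc
  have hpos : |(1 : ℝ)| ≤ 1 := by norm_num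
  have hneg : |(-1 : ℝ)| ≤ 1 := by norm_num
  rw [B2, integral_congr_ae (ae_of_all _ hpt), integral_div, Measure.volume_eq_prod,
    integral_add (integrable_prod_mul_sub_mul (hd 1 hpos) (he 1 hpos) (he (-1) hneg) (hd (-1) hneg))
      (integrable_prod_mul_sub_mul (he (-1) hneg) (hd (-1) hneg) (hd 1 hpos) (he 1 hpos)),
    integral_prod_mul_sub_mul (hd 1 hpos) (he 1 hpos) (he (-1) hneg) (hd (-1) hneg),
    integral_prod_mul_sub_mul (he (-1) hneg) (hd (-1) hneg) (hd 1 hpos) (he 1 hpos)]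
  simp only [d, e, one_mul, neg_one_mul]
  ring

lemma shr_sub_eq {x y : ℝ} (h : x ≠ y) :
    shr (x - y) = 2 * (x - y) * exp (x + y) / (exp (2 * x) - exp (2 * y)) := by
  have hsinh : sinh (x - y) = (exp (2 * x) - exp (2 * y)) / (2 * exp (x + y)) := by
    have h₁ : exp (x - y) * exp (x + y) = exp (2 * x) := by rw [← exp_add]; ring_nf
    have h₂ : exp (-(x - y)) * exp (x + y) = exp (2 * y) := by rw [← exp_add]; ring_nf
    rw [sinh_eq, eq_div_iff (by positivity)]
    linear_combination h₁ - h₂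
  rw [shr, if_neg (sub_ne_zero.2 h), hsinh, div_div_eq_mul_div]
  ring

theorem B2_eq_of_ne {w : Fin 3 → ℝ} (h₀₁ : w 0 ≠ w 1) (h₀₂ : w 0 ≠ w 2) (h₁₂ : w 1 ≠ w 2) :
    B2 w = 4 * (shr (w 0 - w 1) * shr (w 0 - w 2) * shr (w 1 - w 2)) := by
  have hE₂ := integral_exp_mul_div_coshProd h₀₁ h₀₂ h₁₂ (m := 2) (by norm_num) le_rfl
  have hE₁ := integral_exp_mul_div_coshProd h₀₁ h₀₂ h₁₂ (m := 1) le_rfl (by norm_num)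
  have hD₂ := integral_mul_exp_mul_div_coshProd h₀₁ h₀₂ h₁₂ (m := 2) (by norm_num) le_rfl
  have hD₁ := integral_mul_exp_mul_div_coshProd h₀₁ h₀₂ h₁₂ (m := 1) le_rfl (by norm_num)
  norm_num at hE₂ hE₁ hD₂ hD₁
  have hsq : ∀ x, exp (2 * x) = exp x ^ 2 := fun x => by rw [← exp_nat_mul]; norm_num
  have hne : ∀ {i j}, w i ≠ w j → exp (w i) ^ 2 - exp (w j) ^ 2 ≠ 0 := fun h => by
    rw [← hsq, ← hsq]
    exact sub_ne_zero.2 (exp_two_mul_ne_exp_two_mul h)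
  rw [B2_eq_moments, hE₂, hE₁, hD₂, hD₁, shr_sub_eq h₀₁, shr_sub_eq h₀₂, shr_sub_eq h₁₂]
  simp only [Fin.sum_univ_three, pfCoeffs, Matrix.cons_val_zero, Matrix.cons_val_one,
    Matrix.cons_val_two, Matrix.head_cons, Matrix.tail_cons, hsq, exp_add]
  field_simp [hne h₀₁, hne h₀₂, hne h₁₂, hne h₀₁.symm, hne h₀₂.symm, hne h₁₂.symm]
  ring

lemma shr_eq_inv_dslope (x : ℝ) : shr x = (dslope sinh 0 x)⁻¹ := by
  rcases eq_or_ne x 0 with rfl | hx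
  · simp [shr, dslope_same]
  · rw [shr, if_neg hx, dslope_of_ne _ hx, slope_def_field, sinh_zero, sub_zero, sub_zero, inv_div]

@[fun_prop]
lemma continuous_shr : Continuous shr := by
  have hcont : Continuous (dslope sinh 0) := continuous_iff_continuousAt.2 fun x => by
    rcases eq_or_ne x 0 with rfl | hx
    · exact continuousAt_dslope_same.2 (differentiable_sinh 0)
    · exact (continuousAt_dslope_of_ne hx).2 continuous_sinh.continuousAt
  have hne : ∀ x, dslope sinh 0 x ≠ 0 := fun x => by
    rcases eq_or_ne x 0 with rfl | hx
    · simp [dslope_same]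
    · rw [dslope_of_ne _ hx, slope_def_field, sinh_zero, sub_zero, sub_zero]
      exact div_ne_zero (sinh_ne_zero.2 hx) hx
  rw [show shr = (dslope sinh 0)⁻¹ from funext shr_eq_inv_dslope]
  exact hcont.inv₀ hne

lemma abs_mul_sinh_le (x : ℝ) : |x * sinh x| ≤ exp (2 * |x|) := by
  rw [abs_mul, abs_sinh, two_mul, exp_add]
  refine mul_le_mul (by linarith [add_one_le_exp |x|]) ?_ (by positivity) (exp_pos _).le
  rw [sinh_eq]
  linarith [exp_pos (-|x|), exp_pos |x|]

lemma abs_B2_integrand_le (w : Fin 3 → ℝ) (z : ℝ × ℝ) :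
    |(z.1 - z.2) * sinh (z.1 - z.2) / (coshProd w z.1 * coshProd w z.2)|
      ≤ 64 * exp (6 * ‖w‖) * (exp (-|z.1|) * exp (-|z.2|)) := by
  have hnum : |(z.1 - z.2) * sinh (z.1 - z.2)| ≤ exp (2 * |z.1| + 2 * |z.2|) :=
    (abs_mul_sinh_le _).trans (exp_le_exp.2 (by linarith [abs_sub z.1 z.2]))
  rw [abs_div, abs_of_pos (mul_pos (coshProd_pos w _) (coshProd_pos w _)), div_eq_mul_inv, mul_inv]
  have hinv : (coshProd w z.1)⁻¹ * (coshProd w z.2)⁻¹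
      ≤ 8 * exp (3 * ‖w‖ - 3 * |z.1|) * (8 * exp (3 * ‖w‖ - 3 * |z.2|)) :=
    mul_le_mul (inv_coshProd_le w _) (inv_coshProd_le w _) (inv_pos.2 (coshProd_pos w _)).le
      (by positivity)
  calc _ ≤ exp (2 * |z.1| + 2 * |z.2|) * (8 * exp (3 * ‖w‖ - 3 * |z.1|)
        * (8 * exp (3 * ‖w‖ - 3 * |z.2|))) :=
        mul_le_mul hnum hinv (mul_pos (inv_pos.2 (coshProd_pos w _))
          (inv_pos.2 (coshProd_pos w _))).le (exp_pos _).le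
    _ = 64 * (exp (2 * |z.1| + 2 * |z.2|) * exp (3 * ‖w‖ - 3 * |z.1|)
          * exp (3 * ‖w‖ - 3 * |z.2|)) := by
        ring
    _ = 64 * exp (6 * ‖w‖) * (exp (-|z.1|) * exp (-|z.2|)) := by
        rw [mul_assoc 64, ← exp_add, ← exp_add, ← exp_add, ← exp_add]
        ring_nf

lemma continuous_B2 : Continuous B2 := by
  have hden : ∀ w (z : ℝ × ℝ), coshProd w z.1 * coshProd w z.2 ≠ 0 := fun w z =>
    (mul_pos (coshProd_pos w _) (coshProd_pos w _)).ne'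
  refine continuous_iff_continuousAt.2 fun w₀ => continuousAt_of_dominated
    (bound := fun z => 64 * exp (6 * (‖w₀‖ + 1)) * (exp (-|z.1|) * exp (-|z.2|))) ?_ ?_ ?_ ?_
  · exact Eventually.of_forall fun w =>
      (Continuous.div (by fun_prop) (by fun_prop [coshProd]) (hden w)).aestronglyMeasurable
  · filter_upwards [Metric.ball_mem_nhds w₀ one_pos] with w hw
    refine ae_of_all _ fun z => (abs_B2_integrand_le w z).trans ?_
    have : ‖w‖ ≤ ‖w₀‖ + 1 := by
      have := norm_sub_norm_le w w₀
      rw [Metric.mem_ball, dist_eq_norm] at hw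
      linarith
    gcongr
  · exact (integrable_exp_neg_abs.mul_prod integrable_exp_neg_abs).const_mul _
  · exact ae_of_all _ fun z => ContinuousAt.div (by fun_prop) (by fun_prop [coshProd]) (hden w₀ z)

theorem B2_eq (w : Fin 3 → ℝ) :
    B2 w = 4 * (shr (w 0 - w 1) * shr (w 0 - w 2) * shr (w 1 - w 2)) := by
  -- the coordinates of `γ t` are pairwise distinct unless `t` is one of three values
  set γ : ℝ → Fin 3 → ℝ := fun t => w + t • ![1, 2, 4]
  have hdense : Dense ({w 0 - w 1, (w 0 - w 2) / 3, (w 1 - w 2) / 2} : Set ℝ)ᶜ :=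
    (Set.toFinite _).countable.dense_compl ℝ
  have hext := Continuous.ext_on hdense (continuous_B2.comp (f := γ) (by fun_prop))
    (g := fun t => 4 * (shr (γ t 0 - γ t 1) * shr (γ t 0 - γ t 2) * shr (γ t 1 - γ t 2)))
    (by fun_prop) fun t ht => by
      simp only [mem_compl_iff, mem_insert_iff, mem_singleton_iff, not_or] at ht
      obtain ⟨h₀₁, h₀₂, h₁₂⟩ := ht
      refine B2_eq_of_ne ?_ ?_ ?_ <;>
        simp only [γ, Pi.add_apply, Pi.smul_apply, smul_eq_mul, Matrix.cons_val_zero,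
          Matrix.cons_val_one, Matrix.cons_val_two, Matrix.head_cons, Matrix.tail_cons] <;> intro h
      · exact h₀₁ (by linarith)
      · exact h₀₂ (by linarith)
      · exact h₁₂ (by linarith)
  simpa only [γ, Function.comp_apply, zero_smul, add_zero] using congrFun hext 0

/-- Evaluation of the integral
`B₂(w) = ∫_{ℝ²} (v₁−v₂) sinh(v₁−v₂) / ∏_{j=1}^3 ∏_{k=1}^2 cosh(w_j−v_k) dv`. -/
theorem B2_eval (w₁ w₂ w₃ : ℝ) :
    ∫ v : ℝ × ℝ, (v.1 - v.2) * Real.sinh (v.1 - v.2) /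
        ((Real.cosh (w₁ - v.1) * Real.cosh (w₁ - v.2)) *
         (Real.cosh (w₂ - v.1) * Real.cosh (w₂ - v.2)) *
         (Real.cosh (w₃ - v.1) * Real.cosh (w₃ - v.2)))
      = 4 * (shr (w₁ - w₂) * shr (w₁ - w₃) * shr (w₂ - w₃)) := by
  have h := B2_eq ![w₁, w₂, w₃]
  simp only [B2, coshProd, Fin.prod_univ_three, Matrix.cons_val_zero, Matrix.cons_val_one,
    Matrix.cons_val_two, Matrix.head_cons, Matrix.tail_cons] at h
  rw [← h]
  congr 1 with v
  ring
end

section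
/- Let λ > 0 and u_1, u_2 ∈ ℝ. The function F_2(λ; t, u) = exp(i u_2 (t_1 + t_2))·∫_{ℝ} exp(i s (u_1 − u_2))·∏_{j=1}^{2} (2 cosh(t_j − s))^{−λ} ds, for real t_1 ≠ t_2, satisfies the bound |F_2(λ; t, u)| ≤ C(λ) · (t_1 − t_2)/sinh(λ (t_1 − t_2)) for some constant C(λ) depending only on λ. -/
/-!
The oscillating factors have modulus one, and `(2 cosh x)^(-λ) ≤ exp (-λ|x|)` since
`2 cosh x ≥ exp |x|`. The resulting majorant integrates exactly: with `d = |t₁ - t₂|`,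
`∫ exp (-λ(|t₁ - s| + |t₂ - s|)) ds = exp (-λd) (d + 1/λ)`, the integrand being constant between
`t₁` and `t₂` and decaying at rate `2λ` outside. Finally `sinh z · exp (-z) (z + 1) ≤ 2z` for
`z ≥ 0`, because `sinh z · exp (-z) = (1 - exp (-2z))/2` is at most both `z` and `1/2`.
-/

open MeasureTheory Real Set

theorem rpow_two_mul_cosh_neg_le_exp {lam : ℝ} (hlam : 0 ≤ lam) (x : ℝ) :
    (2 * cosh x) ^ (-lam) ≤ exp (-(lam * |x|)) := by
  have hexp_abs : exp |x| ≤ 2 * cosh x := by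
    rw [cosh_eq]
    rcases abs_cases x with ⟨hx, -⟩ | ⟨hx, -⟩ <;> rw [hx] <;> linarith [exp_pos x, exp_pos (-x)]
  calc (2 * cosh x) ^ (-lam) ≤ exp |x| ^ (-lam) :=
        rpow_le_rpow_of_nonpos (exp_pos _) hexp_abs (neg_nonpos.mpr hlam)
    _ = exp (-(lam * |x|)) := by rw [← exp_mul]; ring_nf

theorem norm_exp_I_mul_ofReal_mul (x : ℝ) {z : ℂ} (hz : z.im = 0) :
    ‖Complex.exp (Complex.I * x * z)‖ = 1 := by
  simp [Complex.norm_exp, hz]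

theorem sinh_mul_exp_neg_mul_add_one_le {z : ℝ} (hz : 0 ≤ z) :
    sinh z * (exp (-z) * (z + 1)) ≤ 2 * z := by
  have hsinh_exp : sinh z * exp (-z) = (1 - exp (-(2 * z))) / 2 := by
    rw [sinh_eq, show -(2 * z) = -z + -z by ring, exp_add]
    field_simp
    rw [mul_sub, ← exp_add, neg_add_cancel, exp_zero]
    ring
  have hexp_ge := add_one_le_exp (-(2 * z))
  have hexp_le : exp (-(2 * z)) ≤ 1 := exp_le_one_iff.mpr (by linarith)
  rw [← mul_assoc, hsinh_exp]
  nlinarith [exp_pos (-(2 * z))]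

theorem div_sinh_mul_abs (lam y : ℝ) : |y| / sinh (lam * |y|) = y / sinh (lam * y) := by
  rcases abs_cases y with ⟨h, -⟩ | ⟨h, -⟩ <;> rw [h]
  rw [mul_neg, sinh_neg, neg_div_neg_eq]

theorem exp_neg_mul_abs_mul_le {lam y : ℝ} (hlam : 0 < lam) (hy : y ≠ 0) :
    exp (-(lam * |y|)) * (|y| + 1 / lam) ≤ 2 * (y / sinh (lam * y)) := by
  have hz : 0 < lam * |y| := by positivity
  have hscaled := sinh_mul_exp_neg_mul_add_one_le hz.le
  rw [← div_sinh_mul_abs, mul_div_assoc', le_div_iff₀ (sinh_pos_iff.mpr hz)]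
  have hrescale :
      exp (-(lam * |y|)) * (|y| + 1 / lam) = exp (-(lam * |y|)) * (lam * |y| + 1) / lam := by
    field_simp
  rw [hrescale, div_mul_eq_mul_div, div_le_iff₀ hlam]
  nlinarith

theorem integral_exp_neg_mul_abs_sub_add_abs_sub_of_le {lam a b : ℝ} (hlam : 0 < lam)
    (hab : a ≤ b) :
    Integrable (fun s => exp (-(lam * (|a - s| + |b - s|)))) ∧
      ∫ s, exp (-(lam * (|a - s| + |b - s|))) = exp (-(lam * (b - a))) * (b - a + 1 / lam) := by
  set f : ℝ → ℝ := fun s => exp (-(lam * (|a - s| + |b - s|)))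
  have hleft : EqOn f (fun s => exp (-(lam * (a + b))) * exp (2 * lam * s)) (Iic a) := by
    intro s (hs : s ≤ a)
    simp only [f, abs_of_nonneg (sub_nonneg.mpr hs), abs_of_nonneg (by linarith : 0 ≤ b - s),
      ← exp_add]
    ring_nf
  have hmid : EqOn f (fun _ => exp (-(lam * (b - a)))) (Ioc a b) := by
    intro s ⟨has, hsb⟩
    simp only [f, abs_of_neg (sub_neg.mpr has), abs_of_nonneg (sub_nonneg.mpr hsb)]
    ring_nf
  have hright : EqOn f (fun s => exp (lam * (a + b)) * exp (-2 * lam * s)) (Ioi b) := by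
    intro s (hs : b < s)
    simp only [f, abs_of_neg (by linarith : a - s < 0), abs_of_neg (sub_neg.mpr hs), ← exp_add]
    ring_nf
  have hlam2 : 0 < 2 * lam := by positivity
  have hneg2lam : -2 * lam < 0 := by linarith
  have ileft : IntegrableOn f (Iic a) :=
    IntegrableOn.congr_fun ((integrableOn_exp_mul_Iic hlam2 a).const_mul _) hleft.symm
      measurableSet_Iic
  have imid : IntegrableOn f (Ioc a b) :=
    (integrableOn_const measure_Ioc_lt_top.ne).congr_fun hmid.symm measurableSet_Ioc
  have iright : IntegrableOn f (Ioi b) :=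
    IntegrableOn.congr_fun ((integrableOn_exp_mul_Ioi hneg2lam b).const_mul _) hright.symm
      measurableSet_Ioi
  have ileft' : IntegrableOn f (Ioi a) := Ioc_union_Ioi_eq_Ioi hab ▸ imid.union iright
  refine ⟨?_, ?_⟩
  · rw [← integrableOn_univ, ← Iic_union_Ioi (a := a)]
    exact ileft.union ileft'
  rw [← intervalIntegral.integral_Iic_add_Ioi ileft ileft', ← Ioc_union_Ioi_eq_Ioi hab,
    setIntegral_union (Ioc_disjoint_Ioi le_rfl) measurableSet_Ioi imid iright,
    setIntegral_congr_fun measurableSet_Iic hleft, setIntegral_congr_fun measurableSet_Ioc hmid,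
    setIntegral_congr_fun measurableSet_Ioi hright, integral_const_mul, integral_const_mul,
    integral_exp_mul_Iic hlam2, integral_exp_mul_Ioi hneg2lam, setIntegral_const,
    volume_real_Ioc_of_le hab, smul_eq_mul]
  field_simp
  rw [← exp_add, ← exp_add]
  ring_nf

theorem integral_exp_neg_mul_abs_sub_add_abs_sub {lam : ℝ} (hlam : 0 < lam) (a b : ℝ) :
    Integrable (fun s => exp (-(lam * (|a - s| + |b - s|)))) ∧
      ∫ s, exp (-(lam * (|a - s| + |b - s|))) = exp (-(lam * |a - b|)) * (|a - b| + 1 / lam) := by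
  rcases le_total a b with hab | hba
  · rw [abs_sub_comm, abs_of_nonneg (sub_nonneg.mpr hab)]
    exact integral_exp_neg_mul_abs_sub_add_abs_sub_of_le hlam hab
  · simp_rw [abs_of_nonneg (sub_nonneg.mpr hba), add_comm |a - _| |b - _|]
    exact integral_exp_neg_mul_abs_sub_add_abs_sub_of_le hlam hba

/-- For `λ > 0` there is a constant `C(λ)` such that for all real `t₁ ≠ t₂` and
real `u₁, u₂`: `|F₂(λ;t,u)| ≤ C(λ) (t₁−t₂)/sinh(λ(t₁−t₂))`. -/
theorem F2_bound (lam : ℝ) (hlam : 0 < lam) :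
    ∃ C : ℝ, 0 < C ∧ ∀ t₁ t₂ u₁ u₂ : ℝ, t₁ ≠ t₂ →
      ‖Complex.exp (Complex.I * u₂ * (t₁ + t₂)) *
          ∫ s : ℝ, Complex.exp (Complex.I * s * (u₁ - u₂)) *
            (((2 * Real.cosh (t₁ - s)) ^ (-lam) * (2 * Real.cosh (t₂ - s)) ^ (-lam) : ℝ) : ℂ)‖
        ≤ C * ((t₁ - t₂) / Real.sinh (lam * (t₁ - t₂))) := by
  refine ⟨2, two_pos, fun t₁ t₂ u₁ u₂ hne => ?_⟩
  obtain ⟨hint, hval⟩ := integral_exp_neg_mul_abs_sub_add_abs_sub hlam t₁ t₂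
  have hpointwise : ∀ s : ℝ, ‖Complex.exp (Complex.I * s * (u₁ - u₂)) *
      (((2 * cosh (t₁ - s)) ^ (-lam) * (2 * cosh (t₂ - s)) ^ (-lam) : ℝ) : ℂ)‖
        ≤ exp (-(lam * (|t₁ - s| + |t₂ - s|))) := fun s => by
    rw [norm_mul, norm_exp_I_mul_ofReal_mul s (by simp), one_mul, Complex.norm_real,
      norm_of_nonneg (by positivity), mul_add, neg_add, exp_add]
    exact mul_le_mul (rpow_two_mul_cosh_neg_le_exp hlam.le (t₁ - s))
        (rpow_two_mul_cosh_neg_le_exp hlam.le (t₂ - s)) (by positivity) (by positivity)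
  rw [norm_mul, norm_exp_I_mul_ofReal_mul u₂ (by simp), one_mul]
  calc _ ≤ ∫ s, exp (-(lam * (|t₁ - s| + |t₂ - s|))) :=
        norm_integral_le_of_norm_le hint (ae_of_all _ hpointwise)
    _ = exp (-(lam * |t₁ - t₂|)) * (|t₁ - t₂| + 1 / lam) := hval
    _ ≤ 2 * ((t₁ - t₂) / sinh (lam * (t₁ - t₂))) :=
        exp_neg_mul_abs_mul_le hlam (sub_ne_zero.mpr hne)
end
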